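/- For every natural number n ≥ 0 and every 0 ≤ f ≤ ⌊n/2⌋, the symmetric group S_{2f} decomposes as a disjoint union S_{2f} = ⨆_{d ∈ D_f} Ψ d, where Ψ = S_{(2^f)} ⋊ Π with S_{(2^f)} the Young subgroup generated by s_1, s_3, ..., s_{2f-1} and Π the subgroup permuting the blocks {1,2},{3,4},...,{2f-1,2f}, and D_f is the set of distinguished representatives defined by the row-standard and first-column-increasing condition. -/

import Mathlib

/-!
STATEMENT 7.  0-based conventions in `Equiv.Perm ℕ`: `S_{2f}` is the set of
permutations fixing every `x ≥ 2f`.  `Ψ = S_{(2^f)} ⋊ Π` is generated by the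
row transpositions `sw (2k)` (`k < f`) and the block swaps
`st i = sw (2i+1) * sw (2i+2) * sw (2i) * sw (2i+1)` (`i+1 < f`).
The paper's coset `Ψ d` (right actions, so `ψ d` is the function `d ∘ ψ`)
is `{d * ψ | ψ ∈ Ψ}` in Mathlib's convention.  The disjoint-union statement
`S_{2f} = ⨆_{d ∈ D_f} Ψ d` says each `σ ∈ S_{2f}` lies in `Ψ d` for exactly
one `d ∈ D_f`.
-/

noncomputable section

def sw (a : ℕ) : Equiv.Perm ℕ := Equiv.swap a (a + 1)

def st (i : ℕ) : Equiv.Perm ℕ :=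
  sw (2 * i + 1) * sw (2 * i + 2) * sw (2 * i) * sw (2 * i + 1)

def Psi (f : ℕ) : Subgroup (Equiv.Perm ℕ) :=
  Subgroup.closure
    ({σ | ∃ k, k < f ∧ σ = sw (2 * k)} ∪ {σ | ∃ i, i + 1 < f ∧ σ = st i})

def Df (f : ℕ) (d : Equiv.Perm ℕ) : Prop :=
  (∀ x, 2 * f ≤ x → d x = x) ∧
  (∀ k, k < f → d (2 * k) < d (2 * k + 1)) ∧
  (∀ k, k + 1 < f → d (2 * k) < d (2 * k + 2))

/-!
Every element of `Psi f` fixes all points `≥ 2f` and commutes with the involution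
`partner` exchanging `2k` and `2k+1`, i.e. it permutes the blocks `{2k, 2k+1}`.

Existence: if `σ` is not already in `D_f`, right multiplication by a row transposition
`sw (2k)` or a block swap `st k` removes a descent and strictly lowers the weight
`∑_{k<f} (f - k) σ(2k)`, so descent on this weight ends at some `d ∈ D_f`.

Uniqueness: if `d, dβ ∈ D_f` with `β` permuting blocks, the row condition forces `β(2k)` to be
even, and the column condition makes `k ↦ β(2k)/2` a strictly monotone self-map of `Fin f`,
hence the identity; so `β = 1`.
-/

open Equiv MulAction

lemma Finset.sum_mul_swap_lt {ι : Type*} [DecidableEq ι] {s : Finset ι} {w b : ι → ℕ} {i j : ι}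
    (hi : i ∈ s) (hj : j ∈ s) (hw : w j < w i) (hb : b j < b i) :
    ∑ x ∈ s, w x * b (swap i j x) < ∑ x ∈ s, w x * b x := by
  have hij : j ≠ i := fun h => (h ▸ hw).false
  have hj' : j ∈ s.erase i := mem_erase.2 ⟨hij, hj⟩
  rw [← add_sum_erase _ _ hi, ← add_sum_erase _ _ hj', ← add_sum_erase _ _ hi,
    ← add_sum_erase _ _ hj', swap_apply_left, swap_apply_right,
    sum_congr rfl fun x hx => by
      rw [swap_apply_of_ne_of_ne (ne_of_mem_erase (mem_of_mem_erase hx)) (ne_of_mem_erase hx)]]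
  nlinarith

lemma Equiv.Perm.apply_lt_of_forall_le_apply_eq {N : ℕ} {β : Perm ℕ} (hβ : ∀ x, N ≤ x → β x = x)
    {x : ℕ} (hx : x < N) : β x < N := by
  by_contra! h
  have := β.injective (hβ _ h)
  omega

def partner (x : ℕ) : ℕ := if x % 2 = 0 then x + 1 else x - 1

lemma partner_involutive : Function.Involutive partner := by
  intro x
  simp only [partner]
  split_ifs <;> omega

def partnerPerm : Perm ℕ := partner_involutive.toPerm

lemma partner_two_mul (k : ℕ) : partner (2 * k) = 2 * k + 1 := by
  simp [partner]

lemma partner_two_mul_add_one (k : ℕ) : partner (2 * k + 1) = 2 * k := by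
  simp only [partner]
  split_ifs <;> omega

lemma sw_apply (a x : ℕ) : sw a x = if x = a then a + 1 else if x = a + 1 then a else x := by
  simp [sw, swap_apply_def]

lemma st_apply (i x : ℕ) :
    st i x = if x = 2 * i then 2 * i + 2 else if x = 2 * i + 1 then 2 * i + 3
      else if x = 2 * i + 2 then 2 * i else if x = 2 * i + 3 then 2 * i + 1 else x := by
  simp only [st, Perm.mul_apply, sw, swap_apply_def]
  split_ifs <;> omega

lemma sw_two_mul_apply_two_mul (k j : ℕ) :
    sw (2 * k) (2 * j) = if j = k then 2 * k + 1 else 2 * j := by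
  rw [sw_apply]
  split_ifs <;> omega

lemma st_apply_two_mul (k j : ℕ) : st k (2 * j) = 2 * swap k (k + 1) j := by
  rw [st_apply, swap_apply_def]
  split_ifs <;> omega

lemma sw_mem_Psi {f k : ℕ} (hk : k < f) : sw (2 * k) ∈ Psi f :=
  Subgroup.subset_closure (Or.inl ⟨k, hk, rfl⟩)

lemma st_mem_Psi {f i : ℕ} (hi : i + 1 < f) : st i ∈ Psi f :=
  Subgroup.subset_closure (Or.inr ⟨i, hi, rfl⟩)

lemma mem_fixingSubgroup_Ici_iff {N : ℕ} {σ : Perm ℕ} :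
    σ ∈ fixingSubgroup (Perm ℕ) (Set.Ici N) ↔ ∀ x, N ≤ x → σ x = x := by
  simp [mem_fixingSubgroup_iff, Perm.smul_def]

lemma Psi_le_fixingSubgroup (f : ℕ) : Psi f ≤ fixingSubgroup (Perm ℕ) (Set.Ici (2 * f)) := by
  rw [Psi, Subgroup.closure_le]
  rintro _ (⟨k, hk, rfl⟩ | ⟨i, hi, rfl⟩) <;>
    refine mem_fixingSubgroup_Ici_iff.2 fun x hx => ?_
  · rw [sw_apply]; split_ifs <;> omega
  · rw [st_apply]; split_ifs <;> omega

lemma Psi_le_centralizer_partnerPerm (f : ℕ) : Psi f ≤ Subgroup.centralizer {partnerPerm} := by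
  rw [Psi, Subgroup.closure_le]
  rintro _ (⟨k, -, rfl⟩ | ⟨i, -, rfl⟩) <;>
    refine Subgroup.mem_centralizer_singleton_iff.2 (Perm.ext fun x => ?_) <;>
    simp only [Perm.mul_apply, partnerPerm, Function.Involutive.coe_toPerm, partner]
  · simp only [sw_apply]; split_ifs <;> omega
  · simp only [st_apply]; split_ifs <;> omega

lemma apply_partner_of_mem_centralizer {β : Perm ℕ} (hβ : β ∈ Subgroup.centralizer {partnerPerm})
    (x : ℕ) : β (partner x) = partner (β x) := by
  simpa [partnerPerm] using Perm.ext_iff.1 (Subgroup.mem_centralizer_singleton_iff.1 hβ) x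

lemma Df.strictMonoOn {f : ℕ} {d : Perm ℕ} (hd : Df f d) :
    StrictMonoOn (fun k => d (2 * k)) (Set.Iio f) :=
  strictMonoOn_of_lt_add_one Set.ordConnected_Iio fun k _ _ hk => by
    simpa [mul_add] using hd.2.2 k hk

def columnWeight (f : ℕ) (σ : Perm ℕ) : ℕ := ∑ k ∈ Finset.range f, (f - k) * σ (2 * k)

lemma columnWeight_mul_sw_lt {f k : ℕ} {σ : Perm ℕ} (hk : k < f) (h : σ (2 * k + 1) < σ (2 * k)) :
    columnWeight f (σ * sw (2 * k)) < columnWeight f σ := by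
  refine Finset.sum_lt_sum (fun j _ => ?_) ⟨k, Finset.mem_range.2 hk, ?_⟩ <;>
    simp only [Perm.mul_apply, sw_two_mul_apply_two_mul]
  · split_ifs with hjk
    · subst hjk; exact Nat.mul_le_mul_left _ h.le
    · rfl
  · simpa using Nat.mul_lt_mul_of_pos_left h (by omega : 0 < f - k)

lemma columnWeight_mul_st_lt {f k : ℕ} {σ : Perm ℕ} (hk : k + 1 < f)
    (h : σ (2 * k + 2) < σ (2 * k)) : columnWeight f (σ * st k) < columnWeight f σ := by
  simp only [columnWeight, Perm.mul_apply, st_apply_two_mul]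
  exact Finset.sum_mul_swap_lt (b := fun j => σ (2 * j)) (Finset.mem_range.2 (by omega))
    (Finset.mem_range.2 hk) (by omega) (by simpa [mul_add] using h)

lemma Df_or_exists_columnWeight_mul_lt {f : ℕ} {σ : Perm ℕ} (hσ : ∀ x, 2 * f ≤ x → σ x = x) :
    Df f σ ∨ ∃ g ∈ Psi f, columnWeight f (σ * g) < columnWeight f σ := by
  by_cases hrow : ∃ k < f, σ (2 * k + 1) < σ (2 * k)
  · obtain ⟨k, hk, h⟩ := hrow
    exact .inr ⟨_, sw_mem_Psi hk, columnWeight_mul_sw_lt hk h⟩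
  by_cases hcol : ∃ k, k + 1 < f ∧ σ (2 * k + 2) < σ (2 * k)
  · obtain ⟨k, hk, h⟩ := hcol
    exact .inr ⟨_, st_mem_Psi hk, columnWeight_mul_st_lt hk h⟩
  push Not at hrow hcol
  exact .inl ⟨hσ, fun k hk => (hrow k hk).lt_of_ne (σ.injective.ne (by omega)),
    fun k hk => (hcol k hk).lt_of_ne (σ.injective.ne (by omega))⟩

theorem exists_Df_mul_mem_Psi {f : ℕ} {σ : Perm ℕ}
    (hσ : σ ∈ fixingSubgroup (Perm ℕ) (Set.Ici (2 * f))) :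
    ∃ d, Df f d ∧ ∃ ψ ∈ Psi f, σ = d * ψ := by
  induction hm : columnWeight f σ using Nat.strong_induction_on generalizing σ with
  | _ m ih =>
  rcases Df_or_exists_columnWeight_mul_lt (mem_fixingSubgroup_Ici_iff.1 hσ) with hd | ⟨g, hg, hlt⟩
  · exact ⟨σ, hd, 1, one_mem _, (mul_one σ).symm⟩
  · obtain ⟨d, hd, ψ, hψ, h⟩ :=
      ih _ (hm ▸ hlt) (mul_mem hσ (Psi_le_fixingSubgroup f hg)) rfl
    exact ⟨d, hd, ψ * g⁻¹, mul_mem hψ (inv_mem hg), by rw [← mul_assoc, ← h, mul_inv_cancel_right]⟩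

lemma even_apply_two_mul_of_Df_mul {f k : ℕ} {d β : Perm ℕ} (hd : Df f d) (hdβ : Df f (d * β))
    (hβ : β ∈ Subgroup.centralizer {partnerPerm}) (hk : k < f) (hlt : β (2 * k) < 2 * f) :
    Even (β (2 * k)) := by
  obtain ⟨j, hj | hj⟩ := Nat.even_or_odd' (β (2 * k))
  · exact ⟨j, by omega⟩
  · have hrow := hdβ.2.1 k hk
    rw [Perm.mul_apply, Perm.mul_apply, ← partner_two_mul, apply_partner_of_mem_centralizer hβ,
      hj, partner_two_mul_add_one] at hrow
    exact absurd (hd.2.1 j (by omega)) hrow.not_gt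

theorem eq_one_of_Df_of_Df_mul {f : ℕ} {d β : Perm ℕ} (hd : Df f d) (hdβ : Df f (d * β))
    (hβ : β ∈ Subgroup.centralizer {partnerPerm}) : β = 1 := by
  have hfix : ∀ x, 2 * f ≤ x → β x = x := fun x hx =>
    d.injective ((hdβ.1 x hx).trans (hd.1 x hx).symm)
  have hlt : ∀ k < f, β (2 * k) < 2 * f := fun k hk =>
    Perm.apply_lt_of_forall_le_apply_eq hfix (by omega)
  have heven : ∀ k < f, β (2 * k) = 2 * (β (2 * k) / 2) := fun k hk =>
    (Nat.mul_div_cancel' (even_apply_two_mul_of_Df_mul hd hdβ hβ hk (hlt k hk)).two_dvd).symm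
  let blockMap : Fin f → Fin f := fun k => ⟨β (2 * k) / 2, by have := hlt k k.2; omega⟩
  have hmono : StrictMono blockMap := fun a b hab => by
    have h := hdβ.strictMonoOn a.2 b.2 hab
    simp only [Perm.mul_apply] at h
    rw [heven a a.2, heven b b.2] at h
    exact (hd.strictMonoOn.lt_iff_lt (blockMap a).2 (blockMap b).2).1 h
  have hblock : ∀ k < f, β (2 * k) = 2 * k := fun k hk => by
    have h : β (2 * k) / 2 = k := congrArg Fin.val (hmono.apply_eq (x := ⟨k, hk⟩))
    rw [heven k hk, h]
  ext x
  rcases lt_or_ge x (2 * f) with hx | hx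
  · obtain ⟨k, rfl | rfl⟩ := Nat.even_or_odd' x
    · exact hblock k (by omega)
    · rw [Perm.coe_one, id, ← partner_two_mul, apply_partner_of_mem_centralizer hβ,
        hblock k (by omega)]
  · exact hfix x hx

theorem stmt7_general (f : ℕ) (σ : Equiv.Perm ℕ)
    (hσ : ∀ x, 2 * f ≤ x → σ x = x) :
    ∃! d : Equiv.Perm ℕ, Df f d ∧ ∃ ψ ∈ Psi f, σ = d * ψ := by
  obtain ⟨d, hd, ψ, hψ, rfl⟩ := exists_Df_mul_mem_Psi (mem_fixingSubgroup_Ici_iff.2 hσ)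
  refine ⟨d, ⟨hd, ψ, hψ, rfl⟩, fun d' ⟨hd', ψ', hψ', h⟩ => ?_⟩
  have hβ : ψ * ψ'⁻¹ ∈ Subgroup.centralizer {partnerPerm} :=
    Psi_le_centralizer_partnerPerm f (mul_mem hψ (inv_mem hψ'))
  have hd'_eq : d' = d * (ψ * ψ'⁻¹) := by rw [← mul_assoc, h, mul_inv_cancel_right]
  rw [hd'_eq, eq_one_of_Df_of_Df_mul hd (hd'_eq ▸ hd') hβ, mul_one]

theorem stmt7 (n f : ℕ) (hf : 2 * f ≤ n) (σ : Equiv.Perm ℕ)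
    (hσ : ∀ x, 2 * f ≤ x → σ x = x) :
    ∃! d : Equiv.Perm ℕ, Df f d ∧ ∃ ψ ∈ Psi f, σ = d * ψ :=
  stmt7_general f σ hσ
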